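/- arXiv:1905.10504 — 2 statements merged into one kernel-verified Lean document; each statement's English description precedes it below -/
import Mathlib

section
/- A set S of nonzero vectors in F_2^n that intersects every (n+1-k)-dimensional linear subspace of F_2^n has at least 2^k - 1 elements; moreover |S| = 2^k - 1 holds if and only if S ∪ {0} is a k-dimensional linear subspace of F_2^n. -/
open Module Submodule Set

private lemma zmod2_cases (a : ZMod 2) : a = 0 ∨ a = 1 := by revert a; decide

private lemma zmod2_card (V : Type) [AddCommGroup V] [Module (ZMod 2) V]
    [FiniteDimensional (ZMod 2) V] : Nat.card V = 2 ^ Module.finrank (ZMod 2) V := by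
  haveI : Finite V := Module.finite_of_finite (ZMod 2)
  haveI : Fintype V := Fintype.ofFinite V
  rw [Nat.card_eq_fintype_card, card_eq_pow_finrank (K := ZMod 2) (V := V), ZMod.card]

private lemma zmod2_addself {V : Type} [AddCommGroup V] [Module (ZMod 2) V] (v : V) :
    v + v = 0 := by
  rw [← two_smul (ZMod 2) v, show (2 : ZMod 2) = 0 from rfl, zero_smul]

private lemma finrank_comap_mkQ {V : Type} [AddCommGroup V] [Module (ZMod 2) V]
    [FiniteDimensional (ZMod 2) V] (P : Submodule (ZMod 2) V)
    (W : Submodule (ZMod 2) (V ⧸ P)) :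
    Module.finrank (ZMod 2) (W.comap P.mkQ) = Module.finrank (ZMod 2) W
      + Module.finrank (ZMod 2) P := by
  set U := W.comap P.mkQ with hU
  have hPU : P ≤ U := by
    intro x hx
    simp only [hU, mem_comap, mkQ_apply, (Submodule.Quotient.mk_eq_zero P).mpr hx]
    exact zero_mem W
  have g := LinearMap.finrank_range_add_finrank_ker (P.mkQ.comp U.subtype)
  have hr : LinearMap.range (P.mkQ.comp U.subtype) = W := by
    rw [LinearMap.range_comp, Submodule.range_subtype]
    exact Submodule.map_comap_eq_of_surjective P.mkQ_surjective W
  have hk : LinearMap.ker (P.mkQ.comp U.subtype) = P.comap U.subtype := by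
    ext x
    simp [LinearMap.mem_ker, Submodule.Quotient.mk_eq_zero]
  rw [hr, hk] at g
  rw [← g, (Submodule.comapSubtypeEquivOfLe hPU).finrank_eq]

theorem bose_burton (n : ℕ) : ∀ (V : Type) [AddCommGroup V] [Module (ZMod 2) V]
    [FiniteDimensional (ZMod 2) V], ∀ k : ℕ, 1 ≤ k → k ≤ n →
    Module.finrank (ZMod 2) V = n → ∀ S : Set V, (0 : V) ∉ S →
    (∀ T : Submodule (ZMod 2) V, Module.finrank (ZMod 2) T = n + 1 - k →
      (S ∩ (T : Set V)).Nonempty) →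
    2 ^ k - 1 ≤ Nat.card S ∧
      (Nat.card S = 2 ^ k - 1 → ∃ W : Submodule (ZMod 2) V,
        (W : Set V) = S ∪ {0} ∧ Module.finrank (ZMod 2) W = k) := by
  induction n using Nat.strong_induction_on with
  | _ n ih =>
  intro V _ _ _ k hk hkn hVn S h0 hmeet
  haveI : Finite V := Module.finite_of_finite (ZMod 2)
  have hcardV : Nat.card V = 2 ^ n := by rw [zmod2_card V, hVn]
  by_cases hall : ∀ v : V, v ≠ 0 → v ∈ S
  · -- S is everything nonzero
    have hSeq : S = Set.univ \ {0} := by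
      ext x
      constructor
      · intro hx
        exact ⟨trivial, fun h => h0 (h ▸ hx)⟩
      · intro hx
        exact hall x hx.2
    have hcardS : Nat.card S = 2 ^ n - 1 := by
      rw [Nat.card_coe_set_eq, hSeq, Set.ncard_diff (by simp), Set.ncard_univ,
        Set.ncard_singleton, hcardV]
    constructor
    · rw [hcardS]
      have : (2:ℕ) ^ k ≤ 2 ^ n := Nat.pow_le_pow_right (by norm_num) hkn
      omega
    · intro hc
      have hkn' : k = n := by
        rw [hcardS] at hc
        have h1 : (2:ℕ) ^ k = 2 ^ n := by
          have := Nat.one_le_two_pow (n := k)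
          have := Nat.one_le_two_pow (n := n)
          omega
        exact Nat.pow_right_injective (le_refl 2) h1
      refine ⟨⊤, ?_, by rw [finrank_top, hVn, hkn']⟩
      rw [Submodule.top_coe, hSeq]
      ext x
      by_cases hx : x = 0 <;> simp [hx]
  · -- there is a nonzero point outside S
    push_neg at hall
    obtain ⟨p, hp0, hpS⟩ := hall
    -- note: hp0 : p ≠ 0, hpS : p ∉ S  (check order!)
    have hkltn : k < n := by
      rcases Nat.lt_or_ge k n with h | h
      · exact h
      · exfalso
        have hkn2 : k = n := le_antisymm hkn h
        apply hpS
        have h1 : Module.finrank (ZMod 2) (span (ZMod 2) {p}) = n + 1 - k := by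
          rw [finrank_span_singleton hp0]; omega
        obtain ⟨s, hsS, hsT⟩ := hmeet _ h1
        rw [SetLike.mem_coe, mem_span_singleton] at hsT
        obtain ⟨a, rfl⟩ := hsT
        rcases zmod2_cases a with rfl | rfl
        · rw [zero_smul] at hsS; exact absurd hsS h0
        · rwa [one_smul] at hsS
    have hn1 : 1 ≤ n := le_trans hk hkn
    set P : Submodule (ZMod 2) V := span (ZMod 2) {p} with hP
    have hP1 : Module.finrank (ZMod 2) P = 1 := finrank_span_singleton hp0
    have hQrank : Module.finrank (ZMod 2) (V ⧸ P) = n - 1 := by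
      have := Submodule.finrank_quotient_add_finrank P
      omega
    set Sb : Set (V ⧸ P) := P.mkQ '' S with hSb
    have h0b : (0 : V ⧸ P) ∉ Sb := by
      rintro ⟨s, hsS, hs0⟩
      rw [mkQ_apply, Submodule.Quotient.mk_eq_zero, hP, mem_span_singleton] at hs0
      obtain ⟨a, rfl⟩ := hs0
      rcases zmod2_cases a with rfl | rfl
      · rw [zero_smul] at hsS; exact h0 hsS
      · rw [one_smul] at hsS; exact hpS hsS
    have hmeetb : ∀ T : Submodule (ZMod 2) (V ⧸ P),
        Module.finrank (ZMod 2) T = (n - 1) + 1 - k → (Sb ∩ (T : Set (V ⧸ P))).Nonempty := by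
      intro T hT
      have hcT : Module.finrank (ZMod 2) (T.comap P.mkQ) = n + 1 - k := by
        rw [finrank_comap_mkQ, hT, hP1]; omega
      obtain ⟨s, hsS, hsT⟩ := hmeet _ hcT
      exact ⟨P.mkQ s, ⟨s, hsS, rfl⟩, hsT⟩
    obtain ⟨IH1, IH2⟩ := ih (n - 1) (by omega) (V ⧸ P) k hk (by omega) hQrank Sb h0b hmeetb
    have hSbS : Nat.card Sb ≤ Nat.card S := by
      rw [Nat.card_coe_set_eq, Nat.card_coe_set_eq, hSb]
      exact Set.ncard_image_le (Set.toFinite S)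
    refine ⟨le_trans IH1 hSbS, ?_⟩
    intro hcard
    have hcardSb : Nat.card Sb = 2 ^ k - 1 := le_antisymm (hcard ▸ hSbS) IH1
    obtain ⟨Wb, hWbS, hWbk⟩ := IH2 hcardSb
    set U : Submodule (ZMod 2) V := Wb.comap P.mkQ with hU
    have hUrank : Module.finrank (ZMod 2) U = k + 1 := by
      rw [hU, finrank_comap_mkQ, hWbk, hP1]
    have hSU : S ⊆ (U : Set V) := by
      intro s hs
      have : P.mkQ s ∈ Sb := ⟨s, hs, rfl⟩
      have : P.mkQ s ∈ (Wb : Set (V ⧸ P)) := by rw [hWbS]; exact Or.inl this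
      exact this
    -- every 2-dimensional subspace of U meets S
    have h2dim : ∀ T₂ : Submodule (ZMod 2) V, T₂ ≤ U →
        Module.finrank (ZMod 2) T₂ = 2 → (S ∩ (T₂ : Set V)).Nonempty := by
      intro T₂ hT₂U hT₂
      obtain ⟨C, hC⟩ := U.exists_isCompl
      have hCrank : Module.finrank (ZMod 2) C = n - (k + 1) := by
        have := Submodule.finrank_add_eq_of_isCompl hC
        omega
      have hinf : T₂ ⊓ C = ⊥ := by
        rw [← le_bot_iff, ← hC.inf_eq_bot]
        exact inf_le_inf_right C hT₂U
      have hTrank : Module.finrank (ZMod 2) ↥(T₂ ⊔ C) = n + 1 - k := by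
        have := Submodule.finrank_sup_add_finrank_inf_eq T₂ C
        rw [hinf, finrank_bot] at this
        omega
      obtain ⟨s, hsS, hsT⟩ := hmeet _ hTrank
      rw [SetLike.mem_coe, Submodule.mem_sup] at hsT
      obtain ⟨t, ht, c, hc, rfl⟩ := hsT
      have hcU : c ∈ U := by
        have h1 : t + c ∈ U := hSU hsS
        have h2 : c = (t + c) - t := by abel
        rw [h2]
        exact sub_mem h1 (hT₂U ht)
      have hc0 : c = 0 := by
        have : c ∈ U ⊓ C := ⟨hcU, hc⟩
        rw [hC.inf_eq_bot] at this
        exact this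
      refine ⟨t + c, hsS, ?_⟩
      rw [hc0, add_zero]
      exact ht
    -- combinatorial endgame inside U
    set W0 : Set V := S ∪ {0} with hW0
    have hW0U : W0 ⊆ (U : Set V) := by
      rintro x (hx | hx)
      · exact hSU hx
      · rw [hx]; exact zero_mem U
    set D : Set V := (U : Set V) \ W0 with hD
    have hDmem : ∀ d ∈ D, d ∈ U ∧ d ∉ S ∧ d ≠ 0 := by
      rintro d ⟨hdU, hdW⟩
      exact ⟨hdU, fun h => hdW (Or.inl h), fun h => hdW (Or.inr h)⟩
    have hadd : ∀ d ∈ D, ∀ d' ∈ D, d ≠ d' → d + d' ∈ S := by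
      intro d hd d' hd' hne
      obtain ⟨hdU, hdS, hd0⟩ := hDmem d hd
      obtain ⟨hd'U, hd'S, hd'0⟩ := hDmem d' hd'
      by_contra hsum
      have hli : LinearIndependent (ZMod 2) ![d, d'] := by
        rw [LinearIndependent.pair_iff' hd0]
        intro a
        rcases zmod2_cases a with rfl | rfl
        · rw [zero_smul]; exact fun h => hd'0 h.symm
        · rw [one_smul]; exact hne
      have hfr2 : Module.finrank (ZMod 2) (span (ZMod 2) {d, d'}) = 2 := by
        have hrange : Set.range ![d, d'] = {d, d'} := by
          simp [Matrix.range_cons, Matrix.range_empty, Set.pair_comm]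
        have h2 := finrank_span_eq_card hli
        rw [hrange] at h2
        simpa using h2
      have hle : span (ZMod 2) {d, d'} ≤ U := by
        rw [span_le]
        rintro x (rfl | rfl)
        · exact hdU
        · exact hd'U
      obtain ⟨s, hsS, hsT⟩ := h2dim _ hle hfr2
      rw [SetLike.mem_coe, mem_span_pair] at hsT
      obtain ⟨a, b, rfl⟩ := hsT
      rcases zmod2_cases a with rfl | rfl <;> rcases zmod2_cases b with rfl | rfl <;>
        simp only [zero_smul, one_smul, add_zero, zero_add] at hsS
      · exact h0 hsS
      · exact hd'S hsS
      · exact hdS hsS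
      · exact hsum hsS
    -- cardinalities
    have hcardU : ((U : Set V)).ncard = 2 ^ (k + 1) := by
      rw [← Nat.card_coe_set_eq]
      have := zmod2_card U
      rw [hUrank] at this
      exact this
    have hcardW0 : W0.ncard = 2 ^ k := by
      rw [hW0, Set.union_singleton, Set.ncard_insert_of_notMem h0 (Set.toFinite S),
        ← Nat.card_coe_set_eq, hcard]
      exact Nat.sub_add_cancel Nat.one_le_two_pow
    have hcardD : D.ncard = 2 ^ k := by
      rw [hD, Set.ncard_diff hW0U (Set.toFinite W0), hcardU, hcardW0, pow_succ,
        Nat.mul_two, Nat.add_sub_cancel]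
    have hDne : D.Nonempty := by
      apply Set.nonempty_of_ncard_ne_zero
      rw [hcardD]
      positivity
    obtain ⟨d0, hd0D⟩ := hDne
    have himsub : (fun x => d0 + x) '' D ⊆ W0 := by
      rintro _ ⟨x, hx, rfl⟩
      show d0 + x ∈ W0
      by_cases hxd : x = d0
      · rw [hxd, zmod2_addself]
        exact Or.inr rfl
      · exact Or.inl (hadd d0 hd0D x hx (fun h => hxd h.symm))
    have himcard : ((fun x => d0 + x) '' D).ncard = 2 ^ k := by
      rw [Set.ncard_image_of_injective D (add_right_injective d0), hcardD]
    have himeq : (fun x => d0 + x) '' D = W0 :=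
      Set.eq_of_subset_of_ncard_le himsub (by rw [hcardW0, himcard]) (Set.toFinite W0)
    have hclosed : ∀ u ∈ W0, ∀ v ∈ W0, u + v ∈ W0 := by
      intro u hu v hv
      rw [← himeq] at hu hv
      obtain ⟨x, hx, hux⟩ := hu
      obtain ⟨y, hy, hvy⟩ := hv
      have hux' : d0 + x = u := hux
      have hvy' : d0 + y = v := hvy
      have he : u + v = x + y := by
        rw [← hux', ← hvy', add_add_add_comm, zmod2_addself, zero_add]
      rw [he]
      by_cases hxy : x = y
      · rw [hxy, zmod2_addself]
        exact Or.inr rfl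
      · exact Or.inl (hadd x hx y hy hxy)
    set W : Submodule (ZMod 2) V :=
      { carrier := W0
        add_mem' := fun {a b} ha hb => hclosed a ha b hb
        zero_mem' := Or.inr rfl
        smul_mem' := by
          intro c x hx
          rcases zmod2_cases c with rfl | rfl
          · rw [zero_smul]; exact Or.inr rfl
          · rwa [one_smul] } with hW
    have hWcoe : (W : Set V) = W0 := rfl
    refine ⟨W, hWcoe, ?_⟩
    have hcW : Nat.card W = 2 ^ k := by
      have : Nat.card W = W0.ncard := by
        rw [← Nat.card_coe_set_eq]
        rfl
      rw [this, hcardW0]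
    have := zmod2_card W
    rw [hcW] at this
    exact (Nat.pow_right_injective (le_refl 2) this.symm)

theorem stmt2 (n k : ℕ) (hk : 1 ≤ k) (hkn : k ≤ n) (S : Set (Fin n → ZMod 2))
    (h0 : (0 : Fin n → ZMod 2) ∉ S)
    (hmeet : ∀ T : Submodule (ZMod 2) (Fin n → ZMod 2),
      Module.finrank (ZMod 2) T = n + 1 - k → (S ∩ (T : Set (Fin n → ZMod 2))).Nonempty) :
    2 ^ k - 1 ≤ Nat.card S ∧
      (Nat.card S = 2 ^ k - 1 ↔
        ∃ W : Submodule (ZMod 2) (Fin n → ZMod 2),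
          (W : Set (Fin n → ZMod 2)) = S ∪ {0} ∧ Module.finrank (ZMod 2) W = k) := by
  have hV : Module.finrank (ZMod 2) (Fin n → ZMod 2) = n := Module.finrank_fin_fun _
  obtain ⟨h1, h2⟩ := bose_burton n (Fin n → ZMod 2) k hk hkn hV S h0 hmeet
  refine ⟨h1, h2, ?_⟩
  rintro ⟨W, hWS, hWk⟩
  have hSW : S = (W : Set (Fin n → ZMod 2)) \ {0} := by
    rw [hWS]
    ext x
    constructor
    · intro hx
      exact ⟨Or.inl hx, fun h => h0 (by simpa [Set.mem_singleton_iff.mp h] using hx)⟩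
    · rintro ⟨hx | hx, hx0⟩
      · exact hx
      · exact absurd hx hx0
  have hcWset : (W : Set (Fin n → ZMod 2)).ncard = 2 ^ k := by
    rw [← Nat.card_coe_set_eq]
    have := zmod2_card W
    rwa [hWk] at this
  rw [Nat.card_coe_set_eq, hSW,
    Set.ncard_diff (by simp) (Set.toFinite _), hcWset, Set.ncard_singleton]
end

section
/- Let n = 2k and F(x) = x^s be a power function on F_{2^n}. If Tr^n_1(αF(x)) is bent for every α ∈ F_{2^n} \ F_{2^k}, then (2^k + 1) divides s. -/
open Finset

def chr (b : ZMod 2) : ℤ := if b = 0 then 1 else -1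

variable {K : Type*} [Field K] [Fintype K] [Algebra (ZMod 2) K]

/-- The absolute trace `Tr^n_1 : F_{2^n} → F_2`. -/
noncomputable def tr (x : K) : ZMod 2 := Algebra.trace (ZMod 2) K x

/-- The Walsh transform of a Boolean function `f` on `K = F_{2^n}`. -/
noncomputable def walshF (f : K → ZMod 2) (l : K) : ℤ :=
  ∑ x, chr (f x + tr (l * x))

/-- `f` is bent on `K = F_{2^{2k}}`: all Walsh values are `±2^k`. -/
def IsBentF (k : ℕ) (f : K → ZMod 2) : Prop :=
  ∀ l : K, walshF f l = 2 ^ k ∨ walshF f l = -(2 ^ k)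

/-! If `2^k + 1 ∤ s`, then `x₀^s ∉ F_{2^k}` for some `x₀ ≠ 0`, because `x^{s(2^k - 1)} = 1` on
all of `F_{2^{2k}}^*` would force `2^{2k} - 1 ∣ s(2^k - 1)`. The substitution `x ↦ x₀x` shows
`W_α(0) = W_{αx₀^s}(0)` for `W_α(0) = ∑ₓ (-1)^{Tr(αx^s)}`, so bentness outside `F_{2^k}` makes
`W_α(0) = ±2^k` for every `α ≠ 0`. By orthogonality of `x ↦ (-1)^{Tr(x)}` these `2^{2k} - 1`
values sum to `0`, which is impossible for an odd number of terms `±2^k`. -/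

lemma chr_add (a b : ZMod 2) : chr (a + b) = chr a * chr b := by
  fin_cases a <;> fin_cases b <;> decide

noncomputable def traceChar : AddChar K ℤ where
  toFun x := chr (tr x)
  map_zero_eq_one' := by simp [tr, chr]
  map_add_eq_mul' a b := by simp only [tr, map_add, chr_add]

omit [Fintype K] in
lemma traceChar_apply (x : K) : traceChar x = chr (tr x) := rfl

lemma traceChar_isPrimitive : (traceChar : AddChar K ℤ).IsPrimitive := by
  intro a ha hψ
  have : Module.Finite (ZMod 2) K := Module.Finite.of_finite
  obtain ⟨c, hc⟩ := Algebra.trace_surjective (ZMod 2) K 1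
  have h := DFunLike.congr_fun hψ (a⁻¹ * c)
  rw [AddChar.mulShift_apply, mul_inv_cancel_left₀ ha, traceChar_apply, tr, hc,
    AddChar.one_apply] at h
  exact absurd h (by decide)

lemma even_card_of_sum_eq_zero {ι : Type*} {t : Finset ι} {f : ι → ℤ} {c : ℤ} (hc : c ≠ 0)
    (hf : ∀ i ∈ t, f i = c ∨ f i = -c) (hsum : ∑ i ∈ t, f i = 0) : Even #t := by
  have hdvd : 2 * c ∣ ∑ i ∈ t, (c - f i) :=
    dvd_sum fun i hi => by rcases hf i hi with h | h <;> simp [h, two_mul]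
  rw [sum_sub_distrib, hsum, sub_zero, sum_const, nsmul_eq_mul] at hdvd
  exact even_iff_two_dvd.mpr (Int.natCast_dvd_natCast.mp ((mul_dvd_mul_iff_right hc).mp hdvd))

lemma add_one_dvd_of_forall_pow_pow_eq {F : Type*} [Field F] [Fintype F] {q s : ℕ}
    (hcard : Fintype.card F = q ^ 2) (hfix : ∀ x : F, x ≠ 0 → (x ^ s) ^ q = x ^ s) :
    q + 1 ∣ s := by
  have hq : 2 ≤ q := by
    have := Fintype.one_lt_card (α := F)
    by_contra!
    interval_cases q <;> simp_all
  have hunits : ∀ u : Fˣ, u ^ ((q - 1) * s) = 1 := by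
    intro u
    have hu : ((u ^ s) ^ q : Fˣ) = u ^ s := Units.ext (by push_cast; exact hfix u u.ne_zero)
    rw [← Nat.sub_add_cancel (by omega : 1 ≤ q), pow_succ, mul_eq_right] at hu
    rw [mul_comm, pow_mul, hu]
  rw [FiniteField.forall_pow_eq_one_iff, hcard,
    show q ^ 2 - 1 = (q - 1) * (q + 1) by simpa [mul_comm] using Nat.sq_sub_sq q 1] at hunits
  exact (Nat.mul_dvd_mul_iff_left (by omega)).mp hunits

lemma walshF_zero (f : K → ZMod 2) : walshF f 0 = ∑ x, chr (f x) := by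
  simp [walshF, tr]

lemma walshF_mul_pow (s : ℕ) (α l : K) {x₀ : K} (hx₀ : x₀ ≠ 0) :
    walshF (fun x => tr (α * x₀ ^ s * x ^ s)) l = walshF (fun x => tr (α * x ^ s)) (l * x₀⁻¹) :=
  Fintype.sum_equiv (Equiv.mulLeft₀ x₀ hx₀) _ _ fun x => by
    simp only [Equiv.mulLeft₀_apply]
    rw [mul_pow, ← mul_assoc, mul_assoc l, inv_mul_cancel_left₀ hx₀]

lemma sum_walshF_zero_pow {s : ℕ} (hs : s ≠ 0) :
    ∑ α : K, walshF (fun x => tr (α * x ^ s)) 0 = Fintype.card K := by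
  classical
  simp_rw [walshF_zero, ← traceChar_apply]
  rw [sum_comm]
  simp_rw [AddChar.sum_mulShift _ traceChar_isPrimitive, pow_eq_zero_iff hs]
  simp

lemma sum_erase_zero_walshF_zero_pow [DecidableEq K] {s : ℕ} (hs : s ≠ 0) :
    ∑ α ∈ univ.erase (0 : K), walshF (fun x => tr (α * x ^ s)) 0 = 0 := by
  have h₀ : walshF (fun x => tr ((0 : K) * x ^ s)) 0 = Fintype.card K := by
    simp [walshF_zero, tr, chr]
  have h := add_sum_erase univ (fun α : K => walshF (fun x => tr (α * x ^ s)) 0) (mem_univ 0)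
  rwa [sum_walshF_zero_pow hs, h₀, add_eq_left] at h

theorem stmt4 (k : ℕ) (hk : 0 < k) (hcard : Fintype.card K = 2 ^ (2 * k)) (s : ℕ)
    (hbent : ∀ α : K, α ^ (2 ^ k) ≠ α →
      IsBentF k (fun x => tr (α * x ^ s))) :
    (2 ^ k + 1) ∣ s := by
  classical
  by_contra hndvd
  have hs : s ≠ 0 := by rintro rfl; exact hndvd (dvd_zero _)
  obtain ⟨x₀, hx₀, hx₀s⟩ : ∃ x₀ : K, x₀ ≠ 0 ∧ (x₀ ^ s) ^ 2 ^ k ≠ x₀ ^ s := by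
    by_contra! h
    exact hndvd (add_one_dvd_of_forall_pow_pow_eq (by rw [hcard, pow_mul']) h)
  have hpm : ∀ α ∈ univ.erase (0 : K),
      walshF (fun x => tr (α * x ^ s)) 0 = 2 ^ k ∨
        walshF (fun x => tr (α * x ^ s)) 0 = -2 ^ k := by
    intro α hα
    by_cases hαk : α ^ 2 ^ k = α
    · have hne : (α * x₀ ^ s) ^ 2 ^ k ≠ α * x₀ ^ s := by
        rw [mul_pow, hαk]
        exact fun h => hx₀s (mul_left_cancel₀ (ne_of_mem_erase hα) h)
      simpa only [walshF_mul_pow s α 0 hx₀, zero_mul] using hbent _ hne 0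
    · exact hbent α hαk 0
  have heven := even_card_of_sum_eq_zero (by positivity) hpm (sum_erase_zero_walshF_zero_pow hs)
  rw [card_erase_of_mem (mem_univ _), card_univ, hcard, Nat.even_sub Nat.one_le_two_pow] at heven
  exact Nat.not_even_one (heven.mp (Nat.even_pow.mpr ⟨even_two, by omega⟩))
end
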